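/- arXiv:0802.4425 — 4 statements merged into one kernel-verified Lean document; each statement's English description precedes it below -/
import Mathlib

section
/- Let G(⋆) be a modification of a finite group G, U its group of invertible elements, and I = G(⋆) \ U. Then the ideal I is nilpotent: there exists n ≥ 1 such that every product of n elements of I equals 0. -/
/-- A modification `G(⋆)` of a group `G`: a semigroup structure on `G⁰ = G ∪ {0}`
(encoded as `WithZero G`) in which the product of two group elements is either their
group product or `0`, `0` is absorbing, and the identity of `G` is an identity. -/
structure Modification (G : Type*) [Group G] where
  mul : WithZero G → WithZero G → WithZero G
  mul_assoc : ∀ x y z, mul (mul x y) z = mul x (mul y z)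
  mul_cases : ∀ x y : G, mul (x : WithZero G) (y : WithZero G) = ((x * y : G) : WithZero G)
      ∨ mul (x : WithZero G) (y : WithZero G) = 0
  zero_mul : ∀ x, mul 0 x = 0
  mul_zero : ∀ x, mul x 0 = 0
  one_mul : ∀ x, mul (1 : WithZero G) x = x
  mul_one : ∀ x, mul x (1 : WithZero G) = x

/-- The set of invertible elements of the monoid `G(⋆)`. -/
def Modification.units {G : Type*} [Group G] (M : Modification G) : Set (WithZero G) :=
  {u | ∃ v, M.mul u v = 1 ∧ M.mul v u = 1}

/-! A non-nilpotent element `g` of `G(⋆)` has `k`-th `⋆`-power `gᵏ` for every `k`, so its `orderOf g`-th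
power is `1` and it is a unit: every element of `I` is nilpotent. Since `G(⋆)` is a finite monoid
it is Dedekind-finite, so `I` is a right ideal. Among the `N + 1` prefix products `pᵢ` of a
product of `N = |G⁰|` elements of `I`, two coincide: `pᵢ = pⱼ = pᵢ w` with `w ∈ I`, hence
`pᵢ = pᵢ wᵏ = 0`, and so is the whole product. -/

theorem mul_pow_eq_self_of_mul_eq_self {M : Type*} [Monoid M] {a w : M} (h : a * w = a) (k : ℕ) :
    a * w ^ k = a := by
  induction k with
  | zero => rw [pow_zero, mul_one]
  | succ k ih => rw [pow_succ, ← mul_assoc, ih, h]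

section MonoidWithZero

variable {M₀ : Type*} [MonoidWithZero M₀]

theorem eq_zero_of_mul_eq_self_of_isNilpotent {a w : M₀} (h : a * w = a) (hw : IsNilpotent w) :
    a = 0 := by
  obtain ⟨k, hk⟩ := hw
  rw [← mul_pow_eq_self_of_mul_eq_self h k, hk, mul_zero]

theorem List.prod_eq_zero_of_forall_not_isUnit [Finite M₀]
    (hnil : ∀ a : M₀, ¬IsUnit a → IsNilpotent a) {l : List M₀} (hl : ∀ a ∈ l, ¬IsUnit a)
    (hlen : Nat.card M₀ ≤ l.length) : l.prod = 0 := by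
  have of_prefix_eq {i j : ℕ} (hij : i < j) (hj : j ≤ l.length)
      (hp : (l.take i).prod = (l.take j).prod) : l.prod = 0 := by
    set w := ((l.take j).drop i).prod
    have hi : i < (l.take j).length := by simpa [hj]
    have hpw : (l.take j).prod = (l.take i).prod * w := by
      rw [← List.prod_take_mul_prod_drop (l.take j) i, List.take_take, min_eq_left hij.le]
    have hw : ¬IsUnit w := by
      rw [show w = (l.take j)[i] * ((l.take j).drop (i + 1)).prod by
        rw [← List.prod_cons, ← List.drop_eq_getElem_cons hi]]
      exact mt isUnit_of_mul_isUnit_left (hl _ (List.mem_of_mem_take (List.getElem_mem hi)))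
    have hzero : (l.take i).prod = 0 :=
      eq_zero_of_mul_eq_self_of_isNilpotent (hpw ▸ hp).symm (hnil w hw)
    rw [← List.prod_take_mul_prod_drop l i, hzero, zero_mul]
  have hprefix : ¬Function.Injective fun i : Fin (l.length + 1) => (l.take i).prod := fun hinj => by
    have := Nat.card_le_card_of_injective _ hinj
    simp only [Nat.card_eq_fintype_card, Fintype.card_fin] at this
    omega
  obtain ⟨i, j, hp, hne⟩ := Function.not_injective_iff.mp hprefix
  rcases Fin.lt_or_lt_of_ne hne with hij | hij
  · exact of_prefix_eq hij j.is_le hp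
  · exact of_prefix_eq hij i.is_le hp.symm

end MonoidWithZero

namespace Modification

variable {G : Type*} [Group G] (M : Modification G)

/-- `G(⋆)` as a monoid with zero: a copy of `WithZero G`, since `WithZero G` itself already
carries the multiplication of `G⁰`. -/
def Carrier (_ : Modification G) : Type _ := WithZero G

instance : MonoidWithZero M.Carrier where
  mul := M.mul
  mul_assoc := M.mul_assoc
  one := (1 : WithZero G)
  one_mul := M.one_mul
  mul_one := M.mul_one
  zero := (0 : WithZero G)
  zero_mul := M.zero_mul
  mul_zero := M.mul_zero

instance [Finite G] : Finite M.Carrier := inferInstanceAs (Finite (Option G))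

def toCarrier : WithZero G → M.Carrier := id

@[simp]
theorem toCarrier_mul (x y : WithZero G) :
    M.toCarrier (M.mul x y) = M.toCarrier x * M.toCarrier y :=
  rfl

theorem toCarrier_eq_zero_iff {x : WithZero G} : M.toCarrier x = 0 ↔ x = 0 := Iff.rfl

theorem mem_units_iff {u : WithZero G} : u ∈ M.units ↔ IsUnit (M.toCarrier u) := by
  rw [isUnit_iff_exists]; rfl

theorem toCarrier_foldl (x : WithZero G) (l : List (WithZero G)) :
    M.toCarrier (l.foldl M.mul x) = ((x :: l).map M.toCarrier).prod := by
  induction l generalizing x with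
  | nil => exact (List.prod_singleton).symm
  | cons y l ih => simp [ih, _root_.mul_assoc]

theorem toCarrier_coe_pow_eq_zero_or (g : G) (k : ℕ) :
    M.toCarrier g ^ k = 0 ∨ M.toCarrier g ^ k = M.toCarrier ↑(g ^ k) := by
  induction k with
  | zero => exact .inr (by rw [pow_zero, pow_zero]; rfl)
  | succ k ih =>
    rcases ih with h | h
    · exact .inl (by rw [pow_succ, h, MulZeroClass.zero_mul])
    · rw [pow_succ, h, ← toCarrier_mul, pow_succ, M.toCarrier_eq_zero_iff]
      exact (M.mul_cases (g ^ k) g).symm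

theorem isNilpotent_of_not_isUnit [Finite G] {a : M.Carrier} (ha : ¬IsUnit a) :
    IsNilpotent a := by
  by_contra hnil
  obtain ⟨g, rfl⟩ : ∃ g : G, M.toCarrier g = a :=
    WithZero.ne_zero_iff_exists.mp fun h => hnil ⟨1, by rw [pow_one]; exact h⟩
  have hpow : M.toCarrier g ^ orderOf g = 1 := by
    rcases M.toCarrier_coe_pow_eq_zero_or g (orderOf g) with h | h
    · exact absurd ⟨_, h⟩ hnil
    · rw [h, pow_orderOf_eq_one]; rfl
  exact ha (IsUnit.of_pow_eq_one hpow (orderOf_pos g).ne')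

end Modification

/-- In a modification of a finite group, the complement `I` of the group of invertible
elements is nilpotent: there is `n ≥ 1` such that every product of `n` elements of `I`
(in any order of association, here the left-normed one) is `0`. -/
theorem modification_nonunits_nilpotent {G : Type*} [Group G] [Finite G]
    (M : Modification G) :
    ∃ n : ℕ, 1 ≤ n ∧ ∀ (x : WithZero G) (l : List (WithZero G)),
      (x :: l).length = n → x ∉ M.units → (∀ y ∈ l, y ∉ M.units) →
      l.foldl M.mul x = 0 := by
  refine ⟨Nat.card M.Carrier, Nat.card_pos, fun x l hlen hx hl => ?_⟩
  rw [← M.toCarrier_eq_zero_iff, M.toCarrier_foldl]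
  refine List.prod_eq_zero_of_forall_not_isUnit (fun _ => M.isNilpotent_of_not_isUnit) ?_
    (by rw [List.length_map, hlen])
  simp only [List.mem_map, List.mem_cons, forall_exists_index, and_imp]
  rintro _ y (rfl | hy) rfl
  exacts [M.mem_units_iff.not.mp hx, M.mem_units_iff.not.mp (hl y hy)]
end

section
/- Let S be a semigroup with zero and A a 0-module over S. For the coboundary operator ∂ⁿ on 0-cochains (partial n-ary maps from S to A defined on tuples with nonzero product), the composite ∂^{n+1} ∘ ∂ⁿ = 0 holds. -/
/-- Merge the `i`-th and `(i+1)`-st entries of a tuple by multiplying them. -/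
def mergeTup {S : Type*} [Mul S] {n : ℕ} (i : Fin n) (s : Fin (n + 1) → S) : Fin n → S :=
  fun j => if j < i then s j.castSucc else if j = i then s i.castSucc * s i.succ else s j.succ

/-- The (left-normed) product of a nonempty tuple in a semigroup. -/
def tupProd {S : Type*} [Mul S] {n : ℕ} (s : Fin (n + 1) → S) : S :=
  List.foldl (· * ·) (s 0) (List.ofFn fun i : Fin n => s i.succ)

/-- The coboundary operator on (total representatives of) `n`-dimensional cochains,
given an action `act` of the semigroup on the abelian group `A`:
`∂f(s₀,…,sₙ) = s₀·f(s₁,…,sₙ) + Σᵢ (−1)^{i+1} f(…,sᵢsᵢ₊₁,…) + (−1)^{n+1} f(s₀,…,s_{n−1})`. -/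
def cobound {S A : Type*} [Mul S] [AddCommGroup A] (act : S → A → A) {n : ℕ}
    (f : (Fin n → S) → A) : (Fin (n + 1) → S) → A :=
  fun s => act (s 0) (f fun j => s j.succ)
    + (∑ i : Fin n, (-1 : ℤ) ^ ((i : ℕ) + 1) • f (mergeTup i s))
    + (-1 : ℤ) ^ (n + 1) • f fun j => s j.castSucc

private lemma npc {a b : ℕ} (h : a % 2 = b % 2) : (-1 : ℤ) ^ a = (-1 : ℤ) ^ b := by
  rw [← Nat.div_add_mod a 2, ← Nat.div_add_mod b 2, pow_add, pow_add, pow_mul, pow_mul]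
  norm_num [h]

section aux
variable {S : Type*} [Mul S]

private lemma foldl_zero [Zero S] (hz₁ : ∀ x : S, 0 * x = 0) (l : List S) :
    List.foldl (· * ·) (0 : S) l = 0 := by
  induction l with
  | nil => rfl
  | cons a l ih => simpa [hz₁] using ih

private lemma tupProd_head [Zero S] (hz₁ : ∀ x : S, 0 * x = 0) {n : ℕ} (s : Fin (n + 2) → S)
    (hs : tupProd s ≠ 0) : s 0 * s 1 ≠ 0 := by
  intro h
  apply hs
  have h1 : ((0 : Fin (n+1)).succ : Fin (n+2)) = 1 := Fin.ext (by simp)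
  rw [tupProd, List.ofFn_succ, List.foldl_cons, h1, h]
  exact foldl_zero hz₁ _

private lemma head_ne [Zero S] (hz₁ : ∀ x : S, 0 * x = 0) {n : ℕ} (s : Fin (n + 2) → S)
    (hs : tupProd s ≠ 0) : s 0 ≠ 0 := by
  intro h
  exact tupProd_head hz₁ s hs (by rw [h, hz₁])

variable {n : ℕ} (s : Fin (n + 2) → S)

private lemma L1 : (fun j : Fin n => mergeTup (0 : Fin (n+1)) s j.succ) = fun j => s j.succ.succ := by
  funext j
  simp only [mergeTup]
  rw [if_neg (by simp [Fin.lt_def]), if_neg (by simp [Fin.ext_iff])]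

private lemma L2 : mergeTup (0 : Fin (n+1)) s 0 = s 0 * s 1 := by
  simp only [mergeTup]
  norm_num

private lemma L3 (i : Fin n) : mergeTup i.succ s 0 = s 0 := by
  simp only [mergeTup]
  rw [if_pos (by simp [Fin.lt_def])]
  exact congrArg s (Fin.ext (by simp))

private lemma L4 (i : Fin n) : (fun j : Fin n => mergeTup i.succ s j.succ)
    = mergeTup i (fun j : Fin (n+1) => s j.succ) := by
  funext j
  simp only [mergeTup, Fin.lt_def, Fin.ext_iff, Fin.val_succ, Fin.coe_castSucc,
    add_lt_add_iff_right, add_left_inj]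
  split_ifs <;> first
    | rfl
    | (exact congrArg s (Fin.ext (by simp)))
    | (congr 1 <;> exact congrArg s (Fin.ext (by simp)))

private lemma L5 : (fun j : Fin n => s j.castSucc.succ) = fun j : Fin n => s j.succ.castSucc := by
  funext j
  exact congrArg s (Fin.ext (by simp))

private lemma L6 (i : Fin n) : (fun j : Fin n => mergeTup i.castSucc s j.castSucc)
    = mergeTup i (fun j : Fin (n+1) => s j.castSucc) := by
  funext j
  simp only [mergeTup, Fin.lt_def, Fin.ext_iff, Fin.val_succ, Fin.coe_castSucc]
  split_ifs <;> first
    | rfl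
    | (exact congrArg s (Fin.ext (by simp)))
    | (congr 1 <;> exact congrArg s (Fin.ext (by simp)))

private lemma L7 : (fun j : Fin n => mergeTup (Fin.last n) s j.castSucc)
    = fun j => s j.castSucc.castSucc := by
  funext j
  simp only [mergeTup]
  rw [if_pos (by simp [Fin.lt_def])]

end aux

set_option maxHeartbeats 2000000 in
private lemma L8 {T : Type*} [Semigroup T] {m : ℕ} (i j : Fin m) (h : (i:ℕ) ≤ (j:ℕ))
    (s : Fin (m + 2) → T) :
    mergeTup j (mergeTup i.castSucc s) = mergeTup i (mergeTup j.succ s) := by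
  funext k
  simp only [mergeTup, Fin.lt_def, Fin.ext_iff, Fin.val_succ, Fin.coe_castSucc]
  split_ifs <;> first
    | rfl
    | omega
    | (exact congrArg s (Fin.ext (by simp; omega)))
    | (congr 1 <;> exact congrArg s (Fin.ext (by simp; omega)))
    | (rw [mul_assoc]; congr 1 <;> first
        | (exact congrArg s (Fin.ext (by simp; omega)))
        | (congr 1 <;> exact congrArg s (Fin.ext (by simp; omega))))


/-- For a semigroup `S` with zero and a 0-module `A` over `S`, the composite of two
successive coboundary operators vanishes on every tuple with nonzero product, i.e.
`∂^{n+1} ∘ ∂ⁿ = 0` on 0-cochains. -/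
theorem cobound_cobound_eq_zero {S A : Type*} [Semigroup S] [Zero S] [AddCommGroup A]
    (hz₁ : ∀ x : S, 0 * x = 0) (hz₂ : ∀ x : S, x * 0 = 0)
    (act : S → A → A)
    (hadd : ∀ (s : S) (a b : A), s ≠ 0 → act s (a + b) = act s a + act s b)
    (hcomp : ∀ (s t : S) (a : A), s * t ≠ 0 → act s (act t a) = act (s * t) a)
    (n : ℕ) (f : (Fin n → S) → A) (s : Fin (n + 2) → S) (hs : tupProd s ≠ 0) :
    cobound act (cobound act f) s = 0 := by
  have h0 : s 0 ≠ 0 := head_ne hz₁ s hs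
  have h01 : s 0 * s 1 ≠ 0 := tupProd_head hz₁ s hs
  let φ : A →+ A := AddMonoidHom.mk' (act (s 0)) (fun a b => hadd (s 0) a b h0)
  -- canonical atoms
  set X1 : A := act (s 0 * s 1) (f fun k : Fin n => s k.succ.succ) with hX1
  set X2 : Fin n → A := fun j => act (s 0) (f (mergeTup j (fun k : Fin (n+1) => s k.succ))) with hX2
  set X3 : A := act (s 0) (f fun k : Fin n => s k.castSucc.succ) with hX3
  set X4 : Fin n → A := fun j => f (mergeTup j (fun k : Fin (n+1) => s k.castSucc)) with hX4
  set X5 : A := f (fun k : Fin n => s k.castSucc.castSucc) with hX5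
  have hT : act (s 0) (cobound act f (fun j : Fin (n+1) => s j.succ))
      = X1 + (∑ j : Fin n, (-1:ℤ)^((j:ℕ)+1) • X2 j) + (-1:ℤ)^(n+1) • X3 := by
    show φ _ = _
    rw [cobound, map_add, map_add, map_sum]
    simp only [map_zsmul]
    congr 1
    congr 1
    · show act (s 0) (act (s (Fin.succ (0 : Fin (n+1)))) _) = _
      rw [show s (Fin.succ (0 : Fin (n+1))) = s 1 from congrArg s (Fin.ext (by simp))]
      rw [hcomp _ _ _ h01]
  have hI : (-1:ℤ)^(n+1+1) • (cobound act f (fun j : Fin (n+1) => s j.castSucc))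
      = -((-1:ℤ)^(n+1) • X3) + (-(∑ j : Fin n, (-1:ℤ)^(n+(j:ℕ)) • X4 j)) + (-X5) := by
    rw [cobound, smul_add, smul_add]
    congr 1
    congr 1
    · show (-1:ℤ)^(n+1+1) • act (s (Fin.castSucc (0 : Fin (n+1)))) (f fun j : Fin n => s j.succ.castSucc) = _
      rw [← L5, show s (Fin.castSucc (0 : Fin (n+1))) = s 0 from congrArg s (Fin.ext (by simp))]
      rw [hX3, pow_succ, mul_neg_one, neg_smul]
    · rw [← Finset.sum_neg_distrib, Finset.smul_sum]
      refine Finset.sum_congr rfl fun j _ => ?_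
      show (-1:ℤ)^(n+1+1) • ((-1:ℤ)^((j:ℕ)+1) • f (mergeTup j (fun k : Fin (n+1) => s k.castSucc))) = _
      simp only [hX4]
      rw [smul_smul, ← neg_smul, ← pow_add]
      congr 1
      rw [npc (a := n+1+1+((j:ℕ)+1)) (b := (n+(j:ℕ))+1) (by omega), pow_succ, mul_neg_one]
    · show (-1:ℤ)^(n+1+1) • ((-1:ℤ)^(n+1) • f (fun k : Fin n => s k.castSucc.castSucc)) = _
      rw [hX5, smul_smul, ← pow_add, npc (a := n+1+1+(n+1)) (b := 1) (by omega)]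
      norm_num
  have cancel_term : ∀ {x y : A} {c d : ℤ}, x = y → c + d = 0 → c • x + d • y = 0 := by
    intro x y c d hxy hcd
    rw [hxy, ← add_smul, hcd, zero_smul]
  have hM : (∑ i : Fin (n+1), (-1:ℤ)^((i:ℕ)+1) • cobound act f (mergeTup i s))
      = (-X1 + (-(∑ j : Fin n, (-1:ℤ)^((j:ℕ)+1) • X2 j)))
        + 0 + ((∑ j : Fin n, (-1:ℤ)^(n+(j:ℕ)) • X4 j) + X5) := by
    have expand : ∀ i : Fin (n+1), (-1:ℤ)^((i:ℕ)+1) • cobound act f (mergeTup i s)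
        = (-1:ℤ)^((i:ℕ)+1) • act (mergeTup i s 0) (f fun j => mergeTup i s j.succ)
          + (-1:ℤ)^((i:ℕ)+1) • (∑ j : Fin n, (-1:ℤ)^((j:ℕ)+1) • f (mergeTup j (mergeTup i s)))
          + (-1:ℤ)^((i:ℕ)+1) • ((-1:ℤ)^(n+1) • f fun j => mergeTup i s j.castSucc) := by
      intro i; rw [cobound, smul_add, smul_add]
    rw [Finset.sum_congr rfl fun i _ => expand i, Finset.sum_add_distrib, Finset.sum_add_distrib]
    congr 1
    congr 1
    · -- first columns: SA
      rw [Fin.sum_univ_succ]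
      congr 1
      · rw [L2, L1, hX1]
        norm_num
      · rw [← Finset.sum_neg_distrib]
        refine Finset.sum_congr rfl fun j _ => ?_
        rw [L3, L4]
        simp only [hX2, Fin.val_succ]
        rw [pow_succ ((-1):ℤ) ((j:ℕ)+1), mul_neg_one, neg_smul]
    · -- SB = 0
      have e1 : ∀ i : Fin (n+1), (-1:ℤ)^((i:ℕ)+1) • (∑ j : Fin n, (-1:ℤ)^((j:ℕ)+1) • f (mergeTup j (mergeTup i s)))
          = ∑ j : Fin n, (-1:ℤ)^((i:ℕ)+(j:ℕ)) • f (mergeTup j (mergeTup i s)) := by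
        intro i
        rw [Finset.smul_sum]
        refine Finset.sum_congr rfl fun j _ => ?_
        rw [smul_smul, ← pow_add, npc (a := (i:ℕ)+1+((j:ℕ)+1)) (b := (i:ℕ)+(j:ℕ)) (by omega)]
      rw [Finset.sum_congr rfl fun i _ => e1 i,
        ← Fintype.sum_prod_type' (f := fun (i : Fin (n+1)) (j : Fin n) =>
          (-1:ℤ)^((i:ℕ)+(j:ℕ)) • f (mergeTup j (mergeTup i s)))]
      refine Finset.sum_ninvolution
        (fun p => if h : (p.1:ℕ) ≤ (p.2:ℕ)
          then (p.2.succ, ⟨(p.1:ℕ), lt_of_le_of_lt h p.2.isLt⟩)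
          else (⟨(p.2:ℕ), by have := p.2.isLt; omega⟩,
                ⟨(p.1:ℕ)-1, by have := p.1.isLt; have := p.2.isLt; omega⟩))
        ?_ ?_ (fun p => Finset.mem_univ _) ?_
      · -- cancellation
        intro p
        by_cases hc : (p.1:ℕ) ≤ (p.2:ℕ)
        · rw [dif_pos hc]
          refine cancel_term (congrArg f ?_) ?_
          · have hcast : (⟨(p.1:ℕ), lt_of_le_of_lt hc p.2.isLt⟩ : Fin n).castSucc = p.1 :=
              Fin.ext rfl
            calc mergeTup p.2 (mergeTup p.1 s)
                = mergeTup p.2 (mergeTup ((⟨(p.1:ℕ), lt_of_le_of_lt hc p.2.isLt⟩ : Fin n)).castSucc s) := by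
                  rw [hcast]
              _ = mergeTup ⟨(p.1:ℕ), lt_of_le_of_lt hc p.2.isLt⟩ (mergeTup p.2.succ s) :=
                  L8 _ p.2 hc s
          · simp only [Fin.val_succ, Fin.val_mk]
            rw [npc (a := (p.2:ℕ)+1+(p.1:ℕ)) (b := ((p.1:ℕ)+(p.2:ℕ))+1) (by omega), pow_succ]
            ring
        · rw [dif_neg hc]
          push_neg at hc
          refine cancel_term (congrArg f ?_) ?_
          · have h1 : (1:ℕ) ≤ (p.1:ℕ) := by omega
            have hcast : (⟨(p.2:ℕ), by have := p.2.isLt; omega⟩ : Fin (n+1))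
                = (p.2).castSucc := Fin.ext rfl
            have hsucc : (⟨(p.1:ℕ)-1, by have := p.1.isLt; have := p.2.isLt; omega⟩ : Fin n).succ
                = p.1 := Fin.ext (by simp [Fin.val_succ]; omega)
            calc mergeTup p.2 (mergeTup p.1 s)
                = mergeTup p.2 (mergeTup ((⟨(p.1:ℕ)-1, by have := p.1.isLt; have := p.2.isLt; omega⟩ : Fin n)).succ s) := by
                  rw [hsucc]
              _ = mergeTup ⟨(p.1:ℕ)-1, _⟩ (mergeTup (p.2).castSucc s) :=
                  (L8 p.2 _ (by simp [Fin.val_mk]; omega) s).symm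
              _ = mergeTup ⟨(p.1:ℕ)-1, _⟩ (mergeTup ⟨(p.2:ℕ), _⟩ s) := by rw [hcast]
          · simp only [Fin.val_mk]
            rw [npc (a := (p.2:ℕ)+((p.1:ℕ)-1)) (b := ((p.1:ℕ)+(p.2:ℕ))+1) (by omega), pow_succ]
            ring
      · -- g p ≠ p
        intro p _ heq
        have h1 := congrArg (fun q : Fin (n+1) × Fin n => (q.1 : ℕ)) heq
        split_ifs at h1 with hc
        · simp only [Fin.val_succ] at h1; omega
        · simp only [Fin.val_mk] at h1; omega
      · -- involution
        intro p
        by_cases hc : (p.1:ℕ) ≤ (p.2:ℕ)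
        · rw [dif_pos hc, dif_neg (by simp only [Fin.val_succ, Fin.val_mk]; omega)]
          exact Prod.ext (Fin.ext (by simp)) (Fin.ext (by simp))
        · rw [dif_neg hc, dif_pos (by simp only [Fin.val_mk]; omega)]
          push_neg at hc
          exact Prod.ext (Fin.ext (by simp only [Fin.val_succ, Fin.val_mk]; omega))
            (Fin.ext (by simp))
    · -- SC
      rw [Fin.sum_univ_castSucc]
      congr 1
      · refine Finset.sum_congr rfl fun j _ => ?_
        rw [L6]
        simp only [hX4, Fin.coe_castSucc]
        rw [smul_smul, ← pow_add, npc (a := (j:ℕ)+1+(n+1)) (b := n+(j:ℕ)) (by omega)]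
      · rw [L7, hX5, smul_smul, ← pow_add, Fin.val_last,
          npc (a := n+1+(n+1)) (b := 0) (by omega), pow_zero, one_smul]
  rw [show cobound act (cobound act f) s
      = act (s 0) (cobound act f fun j => s j.succ)
        + (∑ i : Fin (n+1), (-1:ℤ)^((i:ℕ)+1) • cobound act f (mergeTup i s))
        + (-1:ℤ)^(n+1+1) • cobound act f (fun j => s j.castSucc) from rfl]
  rw [hT, hM, hI]
  abel
end

section
/- Let S = G(⋆) be a modification of a finite group G with group of invertible elements U, and suppose U is normal in G. Then for every a ∈ U and every nonzero non-invertible x ∈ S, there exists a unique element a_x ∈ U such that a⋆x = x⋆a_x. Moreover the map a ↦ a_x is a bijection (indeed an automorphism) of U satisfying (ab)_x = a_x ⋆ b_x. -/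
/-- The invertible elements of `G(⋆)` viewed as a subset of `G`. -/
def Modification.unitSet {G : Type*} [Group G] (M : Modification G) : Set G :=
  {a : G | (a : WithZero G) ∈ M.units}


lemma Modification.unit_mul_coe {G : Type*} [Group G] (M : Modification G) {a : G}
    (ha : a ∈ M.unitSet) (b : G) :
    M.mul (a : WithZero G) (b : WithZero G) = ((a * b : G) : WithZero G) := by
  obtain ⟨v, hav, hva⟩ := ha
  rcases M.mul_cases a b with h | h
  · exact h
  · exfalso
    apply WithZero.coe_ne_zero (a := b)
    calc (b : WithZero G) = M.mul 1 (b : WithZero G) := (M.one_mul _).symm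
      _ = M.mul (M.mul v (a : WithZero G)) (b : WithZero G) := by rw [hva]
      _ = M.mul v (M.mul (a : WithZero G) (b : WithZero G)) := M.mul_assoc _ _ _
      _ = 0 := by rw [h, M.mul_zero]

lemma Modification.coe_mul_unit {G : Type*} [Group G] (M : Modification G) {b : G}
    (hb : b ∈ M.unitSet) (a : G) :
    M.mul (a : WithZero G) (b : WithZero G) = ((a * b : G) : WithZero G) := by
  obtain ⟨v, hbv, hvb⟩ := hb
  rcases M.mul_cases a b with h | h
  · exact h
  · exfalso
    apply WithZero.coe_ne_zero (a := a)
    calc (a : WithZero G) = M.mul (a : WithZero G) 1 := (M.mul_one _).symm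
      _ = M.mul (a : WithZero G) (M.mul (b : WithZero G) v) := by rw [hbv]
      _ = M.mul (M.mul (a : WithZero G) (b : WithZero G)) v := (M.mul_assoc _ _ _).symm
      _ = 0 := by rw [h, M.zero_mul]

/-- Let `S = G(⋆)` be a modification of a finite group `G` whose group `U` of invertible
elements is normal in `G`.  Then for every `a ∈ U` and every nonzero non-invertible `x`,
there is a unique `a_x ∈ U` with `a⋆x = x⋆a_x`; moreover `a ↦ a_x` is injective and
surjective on `U` and satisfies `(ab)_x = a_x ⋆ b_x`. -/
theorem modification_conjugation_by_nonunit {G : Type*} [Group G] [Finite G]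
    (M : Modification G)
    (hnorm : ∀ g a : G, a ∈ M.unitSet → g * a * g⁻¹ ∈ M.unitSet)
    (x : G) (hx : x ∉ M.unitSet) :
    (∀ a ∈ M.unitSet, ∃! b : G, b ∈ M.unitSet ∧
        M.mul (a : WithZero G) (x : WithZero G) = M.mul (x : WithZero G) (b : WithZero G)) ∧
    (∀ a b c : G, a ∈ M.unitSet → b ∈ M.unitSet → c ∈ M.unitSet →
        M.mul (a : WithZero G) (x : WithZero G) = M.mul (x : WithZero G) (c : WithZero G) →
        M.mul (b : WithZero G) (x : WithZero G) = M.mul (x : WithZero G) (c : WithZero G) →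
        a = b) ∧
    (∀ c ∈ M.unitSet, ∃ a ∈ M.unitSet,
        M.mul (a : WithZero G) (x : WithZero G) = M.mul (x : WithZero G) (c : WithZero G)) ∧
    (∀ a b c d : G, a ∈ M.unitSet → b ∈ M.unitSet → c ∈ M.unitSet → d ∈ M.unitSet →
        M.mul (a : WithZero G) (x : WithZero G) = M.mul (x : WithZero G) (c : WithZero G) →
        M.mul (b : WithZero G) (x : WithZero G) = M.mul (x : WithZero G) (d : WithZero G) →
        (M.mul ((a * b : G) : WithZero G) (x : WithZero G)
          = M.mul (x : WithZero G) ((c * d : G) : WithZero G) ∧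
         M.mul (c : WithZero G) (d : WithZero G) = ((c * d : G) : WithZero G))) := by

  refine ⟨?_, ?_, ?_, ?_⟩
  · intro a ha
    refine ⟨x⁻¹ * a * x, ⟨?_, ?_⟩, ?_⟩
    · have := hnorm x⁻¹ a ha
      rwa [inv_inv] at this
    · rw [M.unit_mul_coe ha, M.coe_mul_unit (by simpa using hnorm x⁻¹ a ha)]
      congr 1
      group
    · rintro b ⟨hb, heq⟩
      rw [M.unit_mul_coe ha, M.coe_mul_unit hb, WithZero.coe_inj] at heq
      rw [mul_assoc, heq]
      group
  · intro a b c ha hb hc h1 h2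
    rw [M.unit_mul_coe ha, M.coe_mul_unit hc, WithZero.coe_inj] at h1
    rw [M.unit_mul_coe hb, M.coe_mul_unit hc, WithZero.coe_inj] at h2
    have : a * x = b * x := h1.trans h2.symm
    exact mul_right_cancel this
  · intro c hc
    refine ⟨x * c * x⁻¹, hnorm x c hc, ?_⟩
    rw [M.unit_mul_coe (hnorm x c hc), M.coe_mul_unit hc, WithZero.coe_inj]
    group
  · intro a b c d ha hb hc hd h1 h2
    rw [M.unit_mul_coe ha, M.coe_mul_unit hc, WithZero.coe_inj] at h1
    rw [M.unit_mul_coe hb, M.coe_mul_unit hd, WithZero.coe_inj] at h2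
    refine ⟨?_, M.unit_mul_coe hc d⟩
    have key : ((a * b : G) : WithZero G) = M.mul (a : WithZero G) (b : WithZero G) :=
      (M.unit_mul_coe ha b).symm
    have key2 : ((c * d : G) : WithZero G) = M.mul (c : WithZero G) (d : WithZero G) :=
      (M.unit_mul_coe hc d).symm
    rw [key, key2, M.mul_assoc, M.unit_mul_coe hb, M.unit_mul_coe ha,
      ← M.mul_assoc, M.coe_mul_unit hc, M.coe_mul_unit hd, WithZero.coe_inj]
    rw [h2, ← mul_assoc, h1]
end

section
/- Let L/K be a finite Galois extension with group G, S = G(⋆) a modification with invertible group U normal in G, and let f ∈ Z²₀(S, L^×) be a 0-cocycle whose restriction to U × U is trivial (f(a,b) = 1 for all a,b ∈ U, written multiplicatively). For each nonzero non-invertible x ∈ S, define π_x : U → L^× by π_x(a) = f(a,x) · f(x,a_x)^{−1}, where a_x ∈ U is the unique element with a⋆x = x⋆a_x. Then π_x is a 1-cocycle of the group U with coefficients in L^×. -/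
/-- `f` is a 2-dimensional 0-cocycle of the modification `G(⋆)` with coefficients in the
0-module `A` (with the action `act`): `s·f(t,u) · f(s, t⋆u) = f(s⋆t, u) · f(s,t)`
whenever the relevant products are nonzero.  (Values of `f` on pairs with zero product
are irrelevant.) -/
def IsCocycle2 {G A : Type*} [Group G] [CommGroup A] (M : Modification G)
    (act : G → A → A) (f : WithZero G → WithZero G → A) : Prop :=
  ∀ s t u : G, M.mul (s : WithZero G) (t : WithZero G) ≠ 0 →
    M.mul (t : WithZero G) (u : WithZero G) ≠ 0 →
    M.mul (s : WithZero G) (M.mul (t : WithZero G) (u : WithZero G)) ≠ 0 →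
    act s (f (t : WithZero G) (u : WithZero G))
        * f (s : WithZero G) (M.mul (t : WithZero G) (u : WithZero G))
      = f (M.mul (s : WithZero G) (t : WithZero G)) (u : WithZero G)
        * f (s : WithZero G) (t : WithZero G)

/-- `f` is the 0-coboundary of the 1-cochain `σ`. -/
def IsCoboundary2Of {G A : Type*} [Group G] [CommGroup A] (M : Modification G)
    (act : G → A → A) (f : WithZero G → WithZero G → A) (σ : WithZero G → A) : Prop :=
  ∀ s t : G, M.mul (s : WithZero G) (t : WithZero G) ≠ 0 →
    f (s : WithZero G) (t : WithZero G)
      = act s (σ (t : WithZero G)) * (σ (M.mul (s : WithZero G) (t : WithZero G)))⁻¹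
          * σ (s : WithZero G)

/-- `f` is a 2-dimensional 0-coboundary. -/
def IsCoboundary2 {G A : Type*} [Group G] [CommGroup A] (M : Modification G)
    (act : G → A → A) (f : WithZero G → WithZero G → A) : Prop :=
  ∃ σ : WithZero G → A, IsCoboundary2Of M act f σ

/-- Two 2-dimensional 0-cochains are cohomologous. -/
def Cohomologous2 {G A : Type*} [Group G] [CommGroup A] (M : Modification G)
    (act : G → A → A) (f g : WithZero G → WithZero G → A) : Prop :=
  ∃ σ : WithZero G → A, ∀ s t : G, M.mul (s : WithZero G) (t : WithZero G) ≠ 0 →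
    f (s : WithZero G) (t : WithZero G)
      = g (s : WithZero G) (t : WithZero G)
          * (act s (σ (t : WithZero G))
              * (σ (M.mul (s : WithZero G) (t : WithZero G)))⁻¹ * σ (s : WithZero G))


namespace Modification
variable {G : Type*} [Group G] (M : Modification G)

lemma mul_unit_ne_zero' {a : G} (ha : a ∈ M.unitSet) {y : WithZero G} (hy : y ≠ 0) :
    M.mul (a : WithZero G) y ≠ 0 := by
  obtain ⟨v, hv1, hv2⟩ := ha
  intro h
  apply hy
  calc y = M.mul 1 y := (M.one_mul y).symm
    _ = M.mul (M.mul v (a : WithZero G)) y := by rw [hv2]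
    _ = M.mul v (M.mul (a : WithZero G) y) := M.mul_assoc ..
    _ = 0 := by rw [h, M.mul_zero]

lemma unit_mul_ne_zero' {a : G} (ha : a ∈ M.unitSet) {y : WithZero G} (hy : y ≠ 0) :
    M.mul y (a : WithZero G) ≠ 0 := by
  obtain ⟨v, hv1, hv2⟩ := ha
  intro h
  apply hy
  calc y = M.mul y 1 := (M.mul_one y).symm
    _ = M.mul y (M.mul (a : WithZero G) v) := by rw [hv1]
    _ = M.mul (M.mul y (a : WithZero G)) v := (M.mul_assoc ..).symm
    _ = 0 := by rw [h, M.zero_mul]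

lemma mul_coe' {a b : G} (h : M.mul (a : WithZero G) (b : WithZero G) ≠ 0) :
    M.mul (a : WithZero G) (b : WithZero G) = ((a * b : G) : WithZero G) :=
  (M.mul_cases a b).resolve_right h

lemma unitSet_mul' {a b : G} (ha : a ∈ M.unitSet) (hb : b ∈ M.unitSet) :
    a * b ∈ M.unitSet := by
  obtain ⟨v, hv1, hv2⟩ := ha
  obtain ⟨w, hw1, hw2⟩ := hb
  have hne : M.mul (a : WithZero G) (b : WithZero G) ≠ 0 :=
    M.mul_unit_ne_zero' ⟨v, hv1, hv2⟩ (by simp)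
  refine ⟨M.mul w v, ?_, ?_⟩
  · rw [← M.mul_coe' hne, M.mul_assoc, ← M.mul_assoc (b : WithZero G), hw1, M.one_mul, hv1]
  · rw [← M.mul_coe' hne, M.mul_assoc, ← M.mul_assoc v, hv2, M.one_mul, hw2]

end Modification

/-- Let `L/K` be finite Galois with group `G`, `S = G(⋆)` a modification whose group of
invertible elements `U` is normal in `G`, and `f` a 0-cocycle with values in `Lˣ` whose
restriction to `U × U` is trivial.  For a nonzero non-invertible `x` and the map
`a ↦ a_x` (determined by `a⋆x = x⋆a_x`), the cochain `π_x(a) = f(a,x)·f(x,a_x)⁻¹` is a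
1-cocycle of the group `U` with coefficients in `Lˣ`. -/

theorem pi_x_is_one_cocycle {K L : Type*} [Field K] [Field L] [Algebra K L]
    [IsGalois K L] [FiniteDimensional K L]
    (M : Modification (L ≃ₐ[K] L))
    (hnorm : ∀ g a : L ≃ₐ[K] L, a ∈ M.unitSet → g * a * g⁻¹ ∈ M.unitSet)
    (f : WithZero (L ≃ₐ[K] L) → WithZero (L ≃ₐ[K] L) → Lˣ)
    (hf : IsCocycle2 M (fun s a => s • a) f)
    (htriv : ∀ a b : L ≃ₐ[K] L, a ∈ M.unitSet → b ∈ M.unitSet →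
      f (a : WithZero (L ≃ₐ[K] L)) (b : WithZero (L ≃ₐ[K] L)) = 1)
    (x : L ≃ₐ[K] L) (hx : x ∉ M.unitSet)
    (conj : (L ≃ₐ[K] L) → (L ≃ₐ[K] L))
    (hconj : ∀ a ∈ M.unitSet, conj a ∈ M.unitSet ∧
      M.mul (a : WithZero (L ≃ₐ[K] L)) (x : WithZero (L ≃ₐ[K] L))
        = M.mul (x : WithZero (L ≃ₐ[K] L)) ((conj a : L ≃ₐ[K] L) : WithZero (L ≃ₐ[K] L))) :
    ∀ a b : L ≃ₐ[K] L, a ∈ M.unitSet → b ∈ M.unitSet →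
      (f ((a * b : L ≃ₐ[K] L) : WithZero (L ≃ₐ[K] L)) (x : WithZero (L ≃ₐ[K] L))
            * (f (x : WithZero (L ≃ₐ[K] L)) ((conj (a * b) : L ≃ₐ[K] L) : WithZero (L ≃ₐ[K] L)))⁻¹)
        = (f (a : WithZero (L ≃ₐ[K] L)) (x : WithZero (L ≃ₐ[K] L))
            * (f (x : WithZero (L ≃ₐ[K] L)) ((conj a : L ≃ₐ[K] L) : WithZero (L ≃ₐ[K] L)))⁻¹)
          * a • (f (b : WithZero (L ≃ₐ[K] L)) (x : WithZero (L ≃ₐ[K] L))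
            * (f (x : WithZero (L ≃ₐ[K] L)) ((conj b : L ≃ₐ[K] L) : WithZero (L ≃ₐ[K] L)))⁻¹) := by

  intro a b ha hb
  obtain ⟨hca, hax⟩ := hconj a ha
  obtain ⟨hcb, hbx⟩ := hconj b hb
  have hab : a * b ∈ M.unitSet := M.unitSet_mul' ha hb
  obtain ⟨hcab, habx⟩ := hconj (a * b) hab
  have hx0 : (x : WithZero (L ≃ₐ[K] L)) ≠ 0 := WithZero.coe_ne_zero
  have n1 : M.mul (a : WithZero (L ≃ₐ[K] L)) (b : WithZero (L ≃ₐ[K] L)) ≠ 0 :=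
    M.mul_unit_ne_zero' ha WithZero.coe_ne_zero
  have n_bx : M.mul (b : WithZero (L ≃ₐ[K] L)) (x : WithZero (L ≃ₐ[K] L)) ≠ 0 := M.mul_unit_ne_zero' hb hx0
  have n_ax : M.mul (a : WithZero (L ≃ₐ[K] L)) (x : WithZero (L ≃ₐ[K] L)) ≠ 0 := M.mul_unit_ne_zero' ha hx0
  have n_abx : M.mul ((a * b : (L ≃ₐ[K] L)) : WithZero (L ≃ₐ[K] L)) (x : WithZero (L ≃ₐ[K] L)) ≠ 0 :=
    M.mul_unit_ne_zero' hab hx0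
  have n_a_bx : M.mul (a : WithZero (L ≃ₐ[K] L)) (M.mul (b : WithZero (L ≃ₐ[K] L)) (x : WithZero (L ≃ₐ[K] L))) ≠ 0 :=
    M.mul_unit_ne_zero' ha n_bx
  have n_xcb : M.mul (x : WithZero (L ≃ₐ[K] L)) ((conj b : (L ≃ₐ[K] L)) : WithZero (L ≃ₐ[K] L)) ≠ 0 :=
    M.unit_mul_ne_zero' hcb hx0
  have n_xca : M.mul (x : WithZero (L ≃ₐ[K] L)) ((conj a : (L ≃ₐ[K] L)) : WithZero (L ≃ₐ[K] L)) ≠ 0 :=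
    M.unit_mul_ne_zero' hca hx0
  have n_cacb : M.mul ((conj a : (L ≃ₐ[K] L)) : WithZero (L ≃ₐ[K] L)) ((conj b : (L ≃ₐ[K] L)) : WithZero (L ≃ₐ[K] L)) ≠ 0 :=
    M.mul_unit_ne_zero' hca WithZero.coe_ne_zero
  have hE : M.mul (a : WithZero (L ≃ₐ[K] L)) (M.mul (b : WithZero (L ≃ₐ[K] L)) (x : WithZero (L ≃ₐ[K] L)))
      = M.mul ((a * b : (L ≃ₐ[K] L)) : WithZero (L ≃ₐ[K] L)) (x : WithZero (L ≃ₐ[K] L)) := by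
    rw [← M.mul_assoc, M.mul_coe' n1]
  -- the chain x ⋆ conj(ab) = x ⋆ (conj a * conj b)
  have hchain : M.mul (x : WithZero (L ≃ₐ[K] L)) ((conj (a * b) : (L ≃ₐ[K] L)) : WithZero (L ≃ₐ[K] L))
      = M.mul (x : WithZero (L ≃ₐ[K] L)) ((conj a * conj b : (L ≃ₐ[K] L)) : WithZero (L ≃ₐ[K] L)) := by
    calc M.mul (x : WithZero (L ≃ₐ[K] L)) ((conj (a * b) : (L ≃ₐ[K] L)) : WithZero (L ≃ₐ[K] L))
        = M.mul ((a * b : (L ≃ₐ[K] L)) : WithZero (L ≃ₐ[K] L)) (x : WithZero (L ≃ₐ[K] L)) := habx.symm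
      _ = M.mul (a : WithZero (L ≃ₐ[K] L)) (M.mul (b : WithZero (L ≃ₐ[K] L)) (x : WithZero (L ≃ₐ[K] L))) := hE.symm
      _ = M.mul (a : WithZero (L ≃ₐ[K] L)) (M.mul (x : WithZero (L ≃ₐ[K] L)) ((conj b : (L ≃ₐ[K] L)) : WithZero (L ≃ₐ[K] L))) := by
          rw [hbx]
      _ = M.mul (M.mul (a : WithZero (L ≃ₐ[K] L)) (x : WithZero (L ≃ₐ[K] L))) ((conj b : (L ≃ₐ[K] L)) : WithZero (L ≃ₐ[K] L)) :=
          (M.mul_assoc ..).symm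
      _ = M.mul (M.mul (x : WithZero (L ≃ₐ[K] L)) ((conj a : (L ≃ₐ[K] L)) : WithZero (L ≃ₐ[K] L)))
            ((conj b : (L ≃ₐ[K] L)) : WithZero (L ≃ₐ[K] L)) := by rw [hax]
      _ = M.mul (x : WithZero (L ≃ₐ[K] L))
            (M.mul ((conj a : (L ≃ₐ[K] L)) : WithZero (L ≃ₐ[K] L)) ((conj b : (L ≃ₐ[K] L)) : WithZero (L ≃ₐ[K] L))) := M.mul_assoc ..
      _ = M.mul (x : WithZero (L ≃ₐ[K] L)) ((conj a * conj b : (L ≃ₐ[K] L)) : WithZero (L ≃ₐ[K] L)) := by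
          rw [M.mul_coe' n_cacb]
  have n_xcab : M.mul (x : WithZero (L ≃ₐ[K] L)) ((conj (a * b) : (L ≃ₐ[K] L)) : WithZero (L ≃ₐ[K] L)) ≠ 0 :=
    M.unit_mul_ne_zero' hcab hx0
  have hconjmul : conj (a * b) = conj a * conj b := by
    have h1 := M.mul_coe' n_xcab
    have h2 := M.mul_coe' (hchain ▸ n_xcab)
    rw [h1, h2] at hchain
    exact mul_left_cancel (WithZero.coe_inj.mp hchain)
  -- cocycle (1): s=a, t=b, u=x
  have eq1 := hf a b x n1 n_bx (hE ▸ n_abx)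
  rw [htriv a b ha hb, mul_one] at eq1
  -- cocycle (2): s=a, t=x, u=conj b
  have eq2 := hf a x (conj b) n_ax n_xcb (by rw [← hbx]; exact n_a_bx)
  rw [← hbx] at eq2
  -- cocycle (3): s=x, t=conj a, u=conj b
  have eq3 := hf x (conj a) (conj b) n_xca n_cacb
    (by rw [M.mul_coe' n_cacb, ← hconjmul]; exact n_xcab)
  rw [htriv (conj a) (conj b) hca hcb, M.mul_coe' n_cacb, ← hconjmul, ← hax] at eq3
  simp only [smul_one, one_mul] at eq3
  -- assemble
  simp only [] at eq1 eq2
  rw [M.mul_coe' n1] at eq1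
  have hP : f (a : WithZero (L ≃ₐ[K] L)) (M.mul (b : WithZero (L ≃ₐ[K] L)) (x : WithZero (L ≃ₐ[K] L)))
      = (a • f (x : WithZero (L ≃ₐ[K] L)) ((conj b : (L ≃ₐ[K] L)) : WithZero (L ≃ₐ[K] L)))⁻¹
        * (f (M.mul (a : WithZero (L ≃ₐ[K] L)) (x : WithZero (L ≃ₐ[K] L))) ((conj b : (L ≃ₐ[K] L)) : WithZero (L ≃ₐ[K] L))
          * f (a : WithZero (L ≃ₐ[K] L)) (x : WithZero (L ≃ₐ[K] L))) := by
    rw [← eq2, inv_mul_cancel_left]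
  rw [← eq1, eq3, hP, smul_mul', smul_inv']
  simp only [mul_inv, inv_inv]
  simp only [mul_comm, mul_left_comm, mul_assoc, inv_mul_cancel_left, mul_inv_cancel_left]
  simp
end
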